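/- In the MHW swaption setting with γ ∈ [0,1), the positive part dominates the negative part at −∞: lim_{ξ → −∞} f₋(ξ)/f₊(ξ) = 0. -/
import Mathlib


noncomputable def mhwVol (a σ τ : ℝ) : ℝ :=
  if a = 0 then σ * τ else σ * (1 - Real.exp (-(a * τ))) / a

lemma mhwVol_strictMono (a σ : ℝ) (ha : 0 ≤ a) (hσ : 0 < σ) : StrictMono (mhwVol a σ) := by
  intro x y hxy
  unfold mhwVol
  split
  · exact mul_lt_mul_of_pos_left hxy hσ
  · rename_i h
    have ha' : 0 < a := lt_of_le_of_ne ha (Ne.symm h)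
    gcongr


lemma mhwVol_zero (a σ : ℝ) : mhwVol a σ 0 = 0 := by
  unfold mhwVol; split <;> simp

lemma step_mono (u : ℕ → ℝ) (p q : ℕ) (h : ∀ k ∈ Finset.Ico p q, u k < u (k+1)) :
    ∀ i j, p ≤ i → i < j → j ≤ q → u i < u j := by
  intro i j hpi hij hjq
  induction j with
  | zero => omega
  | succ n ih =>
    rcases Nat.lt_succ_iff_lt_or_eq.mp hij with h' | h'
    · exact lt_trans (ih h' (by omega)) (h n (Finset.mem_Ico.mpr ⟨by omega, by omega⟩))
    · subst h'; exact h i (Finset.mem_Ico.mpr ⟨hpi, by omega⟩)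

/-- For `γ ∈ [0,1)`, the positive part of `f` dominates the negative part at `−∞`:
`f₋(ξ)/f₊(ξ) → 0` as `ξ → −∞`. -/
theorem negative_part_negligible_atBot
    (a σ γ ζ : ℝ) (ha : 0 ≤ a) (hσ : 0 < σ) (hγ0 : 0 ≤ γ) (hγ1 : γ < 1) (hζ : 0 < ζ)
    (α ω α' ω' : ℕ) (hω : α + 1 ≤ ω) (hω' : α' + 2 ≤ ω')
    (t t' : ℕ → ℝ)
    (ht : ∀ j ∈ Finset.Ico α ω, t j < t (j+1))
    (ht' : ∀ ι ∈ Finset.Ico α' ω', t' ι < t' (ι+1))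
    (hstart : t' α' = t α) (hend : t' ω' = t ω)
    (c B : ℕ → ℝ) (hc : ∀ j ∈ Finset.Icc (α+1) ω, 0 < c j)
    (hB : ∀ j ∈ Finset.Icc (α+1) ω, 0 < B j)
    (B' β : ℕ → ℝ) (hB' : ∀ ι ∈ Finset.Ico α' ω', 0 < B' ι) (hB'α' : B' α' = 1)
    (hβ : ∀ ι ∈ Finset.Ico α' ω', 1 ≤ β ι)
    (ς ς' ν : ℕ → ℝ)
    (hς : ∀ j, ς j = (1 - γ) * mhwVol a σ (t j - t α))
    (hς' : ∀ ι, ς' ι = (1 - γ) * mhwVol a σ (t' ι - t α))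
    (hν : ∀ ι, ν ι = mhwVol a σ (t' ι - t α) - γ * mhwVol a σ (t' (ι+1) - t α))
    (fp fm : ℝ → ℝ)
    (hfp : ∀ ξ : ℝ, fp ξ =
        (∑ j ∈ Finset.Icc (α+1) ω, c j * B j * Real.exp (-(ς j) * ξ - (ς j)^2 * ζ^2 / 2))
      + (∑ ι ∈ Finset.Ico (α'+1) ω', B' ι * Real.exp (-(ς' ι) * ξ - (ς' ι)^2 * ζ^2 / 2)))
    (hfm : ∀ ξ : ℝ, fm ξ =
      ∑ ι ∈ Finset.Ico α' ω', β ι * B' ι * Real.exp (-(ν ι) * ξ - (ν ι)^2 * ζ^2 / 2))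
    :
    Filter.Tendsto (fun ξ => fm ξ / fp ξ) Filter.atBot (nhds 0) := by
  have hvmono := mhwVol_strictMono a σ ha hσ
  have hωmem : ω ∈ Finset.Icc (α+1) ω := Finset.mem_Icc.mpr ⟨hω, le_rfl⟩
  have hcB : 0 < c ω * B ω := mul_pos (hc ω hωmem) (hB ω hωmem)
  -- key strict inequality : for ι ∈ Ico α' ω', ν ι < ς ω
  have hkey : ∀ ι ∈ Finset.Ico α' ω', ν ι < ς ω := by
    intro ι hι
    rw [Finset.mem_Ico] at hι
    have ht1 : t' ι ≤ t' (ι+1) := by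
      have := ht' ι (Finset.mem_Ico.mpr hι); linarith
    have hvle : mhwVol a σ (t' ι - t α) ≤ mhwVol a σ (t' (ι+1) - t α) :=
      hvmono.monotone (by linarith)
    have hlt : t' ι < t' ω' := step_mono t' α' ω' ht' ι ω' hι.1 hι.2 le_rfl
    have hvlt : mhwVol a σ (t' ι - t α) < mhwVol a σ (t ω - t α) := by
      have := hvmono (show t' ι - t α < t' ω' - t α by linarith)
      rwa [hend] at this
    rw [hν, hς]
    nlinarith
  -- positivity facts
  set D : ℝ → ℝ := fun ξ => c ω * B ω * Real.exp (-(ς ω) * ξ - (ς ω)^2 * ζ^2 / 2) with hD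
  have hDpos : ∀ ξ, 0 < D ξ := fun ξ => mul_pos hcB (Real.exp_pos _)
  have hfpge : ∀ ξ, D ξ ≤ fp ξ := by
    intro ξ
    rw [hfp]
    have h1 : D ξ ≤ ∑ j ∈ Finset.Icc (α+1) ω,
        c j * B j * Real.exp (-(ς j) * ξ - (ς j)^2 * ζ^2 / 2) := by
      apply Finset.single_le_sum (f := fun j => c j * B j * Real.exp (-(ς j) * ξ - (ς j)^2 * ζ^2 / 2))
        (fun j hj => le_of_lt (mul_pos (mul_pos (hc j hj) (hB j hj)) (Real.exp_pos _))) hωmem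
    have h2 : (0:ℝ) ≤ ∑ ι ∈ Finset.Ico (α'+1) ω',
        B' ι * Real.exp (-(ς' ι) * ξ - (ς' ι)^2 * ζ^2 / 2) := by
      apply Finset.sum_nonneg
      intro ι hι
      rw [Finset.mem_Ico] at hι
      exact le_of_lt (mul_pos (hB' ι (Finset.mem_Ico.mpr ⟨by omega, hι.2⟩)) (Real.exp_pos _))
    linarith
  have hfmnn : ∀ ξ, 0 ≤ fm ξ := by
    intro ξ
    rw [hfm]
    apply Finset.sum_nonneg
    intro ι hι
    have h1 := hβ ι hι
    have h2 := hB' ι hι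
    positivity
  -- squeeze
  set g : ℝ → ℝ := fun ξ => ∑ ι ∈ Finset.Ico α' ω',
      β ι * B' ι * Real.exp (-(ν ι) * ξ - (ν ι)^2 * ζ^2 / 2) / D ξ with hg
  have hge : ∀ ξ, fm ξ / fp ξ ≤ g ξ := by
    intro ξ
    have : fm ξ / fp ξ ≤ fm ξ / D ξ := by
      gcongr
      all_goals first | exact hfpge ξ | exact hDpos ξ | exact hfmnn ξ
    refine this.trans_eq ?_
    rw [hfm, hg, Finset.sum_div]
  have hle0 : ∀ ξ, 0 ≤ fm ξ / fp ξ := by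
    intro ξ
    exact div_nonneg (hfmnn ξ) (le_of_lt ((hDpos ξ).trans_le (hfpge ξ)))
  have hgt : Filter.Tendsto g Filter.atBot (nhds 0) := by
    rw [hg, show (0:ℝ) = ∑ ι ∈ Finset.Ico α' ω', (0:ℝ) by simp]
    apply tendsto_finset_sum
    intro ι hι
    have hk : 0 < ς ω - ν ι := sub_pos.mpr (hkey ι hι)
    have heq : ∀ ξ : ℝ, β ι * B' ι * Real.exp (-(ν ι) * ξ - (ν ι)^2 * ζ^2 / 2) / D ξ
        = (β ι * B' ι / (c ω * B ω) * Real.exp ((ς ω ^ 2 - ν ι ^ 2) * ζ^2 / 2))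
          * Real.exp ((ς ω - ν ι) * ξ) := by
      intro ξ
      rw [hD]
      simp only []
      rw [mul_div_mul_comm, ← Real.exp_sub,
        show (-(ν ι) * ξ - (ν ι)^2 * ζ^2 / 2) - (-(ς ω) * ξ - (ς ω)^2 * ζ^2 / 2)
          = (ς ω ^ 2 - ν ι ^ 2) * ζ^2 / 2 + (ς ω - ν ι) * ξ by ring,
        Real.exp_add, mul_assoc]
    have h1 : Filter.Tendsto (fun ξ : ℝ => (ς ω - ν ι) * ξ) Filter.atBot Filter.atBot :=
      Filter.Tendsto.const_mul_atBot hk Filter.tendsto_id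
    have h2 := (Real.tendsto_exp_atBot.comp h1).const_mul
      (β ι * B' ι / (c ω * B ω) * Real.exp ((ς ω ^ 2 - ν ι ^ 2) * ζ^2 / 2))
    simp only [mul_zero] at h2
    exact (Filter.Tendsto.congr (fun ξ => (heq ξ).symm)) h2
  exact squeeze_zero hle0 hge hgt
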